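/- arXiv:2212.05151 — 6 statements merged into one kernel-verified Lean document; each statement's English description precedes it below -/
import Mathlib

section
/- For the Bernoulli model, for every m = 1, …, N−1 and every x = (x_1,…,x_m) ∈ {0,1}^m with s_m = x_1 + … + x_m, one has (𝒥_{m+1} U_{m+1}^N)(s_m) = C(m, s_m) · (𝓘_{m+1} V_{m+1}^N)(x_1,…,x_m), where C(m,s) is the binomial coefficient. (Proposition 1.) -/
open scoped BigOperators

/-- number of successes in the sample `x` -/
def count {n : ℕ} (x : Fin n → Bool) : ℕ := (Finset.univ.filter fun i => x i).card

/-- joint Bernoulli density `f_θ^n(x) = θ^{s_n(x)} (1-θ)^{n-s_n(x)}` -/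
noncomputable def fpow (θ : ℝ) (n : ℕ) (x : Fin n → Bool) : ℝ :=
  θ ^ count x * (1 - θ) ^ (n - count x)

/-- binomial pmf `g_θ^n(s) = C(n,s) θ^s (1-θ)^{n-s}` -/
noncomputable def binom (θ : ℝ) (n s : ℕ) : ℝ :=
  (n.choose s : ℝ) * θ ^ s * (1 - θ) ^ (n - s)

/-- `v_n(x) = min_{1≤j≤k} Σ_{i≠j} λ_{ij} f_{θ_i}^n(x)` -/
noncomputable def vfun (k : ℕ) (θs : Fin k → ℝ) (lam : Fin k → Fin k → ℝ)
    (n : ℕ) (x : Fin n → Bool) : ℝ :=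
  ⨅ j : Fin k, ∑ i ∈ Finset.univ.filter (· ≠ j), lam i j * fpow (θs i) n x

/-- `u_n(s) = min_{1≤j≤k} Σ_{i≠j} λ_{ij} g_{θ_i}^n(s)` -/
noncomputable def ufun (k : ℕ) (θs : Fin k → ℝ) (lam : Fin k → Fin k → ℝ)
    (n s : ℕ) : ℝ :=
  ⨅ j : Fin k, ∑ i ∈ Finset.univ.filter (· ≠ j), lam i j * binom (θs i) n s

/-- `f_{γϑ}^n(x) = Σ_i γ_i f_{ϑ_i}^n(x)` -/
noncomputable def fmix (K : ℕ) (γ ϑ : Fin K → ℝ) (n : ℕ) (x : Fin n → Bool) : ℝ :=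
  ∑ i, γ i * fpow (ϑ i) n x

/-- `g_{γϑ}^n(s) = Σ_i γ_i g_{ϑ_i}^n(s)` -/
noncomputable def gmix (K : ℕ) (γ ϑ : Fin K → ℝ) (n s : ℕ) : ℝ :=
  ∑ i, γ i * binom (ϑ i) n s

/-- the backward recursion `V_n^N`: `V_N^N = v_N` and
`V_{n}^N = min{v_{n}, f_{γϑ}^{n} + 𝓘_{n+1} V_{n+1}^N}` for `n < N`, where
`(𝓘_{n+1} V)(x) = V(x,0) + V(x,1)` (the operator `𝓘` is integration with respect to
counting measure on `{0,1}`). -/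
noncomputable def V (k : ℕ) (θs : Fin k → ℝ) (lam : Fin k → Fin k → ℝ)
    (K : ℕ) (γ ϑ : Fin K → ℝ) (N : ℕ) : (n : ℕ) → (Fin n → Bool) → ℝ :=
  fun n x =>
    if _h : n < N then
      min (vfun k θs lam n x)
        (fmix K γ ϑ n x +
          (V k θs lam K γ ϑ N (n + 1) (Fin.snoc x false) +
            V k θs lam K γ ϑ N (n + 1) (Fin.snoc x true)))
    else vfun k θs lam n x
  termination_by n => N - n

/-- the backward recursion `U_n^N`: `U_N^N = u_N` and
`U_{n}^N(s) = min{u_{n}(s), g_{γϑ}^{n}(s) + (𝒥_{n+1} U_{n+1}^N)(s)}` for `n < N`, where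
`(𝒥_{n+1} U)(s) = U(s)·(n+1-s)/(n+1) + U(s+1)·(s+1)/(n+1)`. -/
noncomputable def U (k : ℕ) (θs : Fin k → ℝ) (lam : Fin k → Fin k → ℝ)
    (K : ℕ) (γ ϑ : Fin K → ℝ) (N : ℕ) : ℕ → ℕ → ℝ :=
  fun n s =>
    if _h : n < N then
      min (ufun k θs lam n s)
        (gmix K γ ϑ n s +
          (U k θs lam K γ ϑ N (n + 1) s * ((n + 1 - s : ℕ) : ℝ) / (n + 1) +
            U k θs lam K γ ϑ N (n + 1) (s + 1) * ((s + 1 : ℕ) : ℝ) / (n + 1)))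
    else ufun k θs lam n s
  termination_by n _s => N - n

/-!
Pointwise `g_θ^n(count x) = C(n, count x) · f_θ^n(x)`, so `u_n` and `g_{γϑ}^n` at `count x` are
`C(n, count x)` times `v_n` and `f_{γϑ}^n` at `x`. Backward induction from `n = N` then gives
`U_n^N(count x) = C(n, count x) · V_n^N(x)` for every `n`. The induction step, like the
proposition itself, passes from `𝒥_{n+1}` to `𝓘_{n+1}` through the identities
`C(n+1, s) (n+1-s) = C(n, s) (n+1)` and `C(n+1, s+1) (s+1) = C(n, s) (n+1)`.
-/

/-- The operator `𝒥_{n+1}`. -/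
noncomputable def binomAvg (W : ℕ → ℝ) (n s : ℕ) : ℝ :=
  W s * ((n + 1 - s : ℕ) : ℝ) / (n + 1) + W (s + 1) * ((s + 1 : ℕ) : ℝ) / (n + 1)

/-- The operator `𝓘_{n+1}`. -/
def snocSum {n : ℕ} (W : (Fin (n + 1) → Bool) → ℝ) (x : Fin n → Bool) : ℝ :=
  W (Fin.snoc x false) + W (Fin.snoc x true)

lemma count_snoc_false {n : ℕ} (x : Fin n → Bool) :
    count (Fin.snoc x false : Fin (n + 1) → Bool) = count x := by
  simp only [count, Finset.card_filter]
  rw [Fin.sum_univ_castSucc]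
  simp

lemma count_snoc_true {n : ℕ} (x : Fin n → Bool) :
    count (Fin.snoc x true : Fin (n + 1) → Bool) = count x + 1 := by
  simp only [count, Finset.card_filter]
  rw [Fin.sum_univ_castSucc]
  simp

lemma binom_count {n : ℕ} (θ : ℝ) (x : Fin n → Bool) :
    binom θ n (count x) = n.choose (count x) * fpow θ n x := by
  rw [binom, fpow, mul_assoc]

lemma ufun_count (k : ℕ) (θs : Fin k → ℝ) (lam : Fin k → Fin k → ℝ) {n : ℕ}
    (x : Fin n → Bool) :
    ufun k θs lam n (count x) = n.choose (count x) * vfun k θs lam n x := by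
  rw [vfun, Real.mul_iInf_of_nonneg (Nat.cast_nonneg _), ufun]
  simp only [Finset.mul_sum, binom_count, mul_left_comm]

lemma gmix_count (K : ℕ) (γ ϑ : Fin K → ℝ) {n : ℕ} (x : Fin n → Bool) :
    gmix K γ ϑ n (count x) = n.choose (count x) * fmix K γ ϑ n x := by
  simp only [gmix, fmix, Finset.mul_sum, binom_count, mul_left_comm]

lemma choose_succ_mul_sub_div (n s : ℕ) :
    ((n + 1).choose s : ℝ) * ((n + 1 - s : ℕ) : ℝ) / (n + 1) = n.choose s := by
  rw [div_eq_iff (by positivity)]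
  exact_mod_cast (Nat.choose_mul_succ_eq n s).symm

lemma choose_succ_succ_mul_div (n s : ℕ) :
    ((n + 1).choose (s + 1) : ℝ) * ((s + 1 : ℕ) : ℝ) / (n + 1) = n.choose s := by
  rw [div_eq_iff (by positivity)]
  exact_mod_cast (by rw [← Nat.add_one_mul_choose_eq]; ring :
    (n + 1).choose (s + 1) * (s + 1) = n.choose s * (n + 1))

lemma binomAvg_count_eq_choose_mul_snocSum {n : ℕ} (W : ℕ → ℝ)
    (Wx : (Fin (n + 1) → Bool) → ℝ)
    (hW : ∀ y, W (count y) = (n + 1).choose (count y) * Wx y) (x : Fin n → Bool) :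
    binomAvg W n (count x) = n.choose (count x) * snocSum Wx x := by
  have h0 := hW (Fin.snoc x false)
  have h1 := hW (Fin.snoc x true)
  rw [count_snoc_false] at h0
  rw [count_snoc_true] at h1
  rw [binomAvg, snocSum, h0, h1]
  linear_combination Wx (Fin.snoc x false) * choose_succ_mul_sub_div n (count x) +
    Wx (Fin.snoc x true) * choose_succ_succ_mul_div n (count x)

theorem U_count_eq_choose_mul_V (k : ℕ) (θs : Fin k → ℝ) (lam : Fin k → Fin k → ℝ)
    (K : ℕ) (γ ϑ : Fin K → ℝ) (N n : ℕ) (x : Fin n → Bool) :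
    U k θs lam K γ ϑ N n (count x) = n.choose (count x) * V k θs lam K γ ϑ N n x := by
  rw [U, V]
  split_ifs
  · have hstep := binomAvg_count_eq_choose_mul_snocSum _ _
      (U_count_eq_choose_mul_V k θs lam K γ ϑ N (n + 1)) x
    rw [binomAvg, snocSum] at hstep
    rw [ufun_count, gmix_count, hstep, ← mul_add, mul_min_of_nonneg _ _ (Nat.cast_nonneg _)]
  · exact ufun_count k θs lam x
termination_by N - n

theorem stmt0_general (k : ℕ) (θs : Fin k → ℝ)
    (lam : Fin k → Fin k → ℝ)
    (K : ℕ) (γ ϑ : Fin K → ℝ)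
    (N : ℕ)
    (m : ℕ) (x : Fin m → Bool) :
    U k θs lam K γ ϑ N (m + 1) (count x) * ((m + 1 - count x : ℕ) : ℝ) / (m + 1) +
        U k θs lam K γ ϑ N (m + 1) (count x + 1) * ((count x + 1 : ℕ) : ℝ) / (m + 1) =
      (m.choose (count x) : ℝ) *
        (V k θs lam K γ ϑ N (m + 1) (Fin.snoc x false) +
          V k θs lam K γ ϑ N (m + 1) (Fin.snoc x true)) :=
  binomAvg_count_eq_choose_mul_snocSum _ _ (U_count_eq_choose_mul_V k θs lam K γ ϑ N (m + 1)) x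

/-- **Proposition 1**: for every `m = 1, …, N−1` and every `x ∈ {0,1}^m` with
`s_m = s_m(x)`, one has
`(𝒥_{m+1} U_{m+1}^N)(s_m) = C(m, s_m) · (𝓘_{m+1} V_{m+1}^N)(x)`. -/
theorem stmt0 (k : ℕ) (hk : 2 ≤ k) (θs : Fin k → ℝ)
    (hθ : ∀ i, θs i ∈ Set.Icc (0 : ℝ) 1)
    (lam : Fin k → Fin k → ℝ) (hlam : ∀ i j, 0 ≤ lam i j)
    (K : ℕ) (hK : 1 ≤ K) (γ ϑ : Fin K → ℝ)
    (hγ : ∀ i, 0 ≤ γ i) (hγ1 : ∑ i, γ i = 1)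
    (hϑ : ∀ i, ϑ i ∈ Set.Icc (0 : ℝ) 1)
    (N : ℕ) (hN : 2 ≤ N)
    (m : ℕ) (hm : 1 ≤ m) (hmN : m ≤ N - 1) (x : Fin m → Bool) :
    U k θs lam K γ ϑ N (m + 1) (count x) * ((m + 1 - count x : ℕ) : ℝ) / (m + 1) +
        U k θs lam K γ ϑ N (m + 1) (count x + 1) * ((count x + 1 : ℕ) : ℝ) / (m + 1) =
      (m.choose (count x) : ℝ) *
        (V k θs lam K γ ϑ N (m + 1) (Fin.snoc x false) +
          V k θs lam K γ ϑ N (m + 1) (Fin.snoc x true)) :=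
  stmt0_general k θs lam K γ ϑ N m x
end

section
/- Let θ ∈ [0,1], m ≥ 1, and let ψ be a stopping rule based on the sufficient statistic. Define b_m^m(s;θ) = g_θ^m(s)(1−ψ_m(s)) for 0 ≤ s ≤ m, and recursively for n = m−1,…,1 and 0 ≤ s ≤ n: b_n^m(s;θ) = [b_{n+1}^m(s;θ)·(n+1−s)/(n+1) + b_{n+1}^m(s+1;θ)·(s+1)/(n+1)]·(1−ψ_n(s)). Then b_1^m(0;θ) + b_1^m(1;θ) = Σ_{x∈{0,1}^m} [∏_{n=1}^m (1−ψ_n(s_n(x)))] · θ^{s_m(x)}(1−θ)^{m−s_m(x)}, i.e., the recursion computes P_θ(τ_ψ > m), the probability that the test does not stop at any step 1,…,m. (Proposition 3.) -/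
/-! Conditioning on the first observation: from statistic `s` at step `n`, the next observation
is `0` with probability `1 - θ` and `1` with probability `θ`. Hence the probability
`continueProb θ ψ n s d` of passing steps `n + 1, …, n + d` satisfies a one-step recursion, and
`binom θ n s * (1 - ψ n s) * continueProb θ ψ n s d` satisfies the recursion defining `brec`,
because `g_θ^{n+1}(s) (n + 1 - s)/(n + 1) = (1 - θ) g_θ^n(s)` and
`g_θ^{n+1}(s + 1) (s + 1)/(n + 1) = θ g_θ^n(s)`. At `n = 1` this unwinds to the claim. -/

open scoped BigOperators

/-- `s_m(x)`: number of successes among the first `m` coordinates of `x ∈ {0,1}^n` -/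
def prefixCount {n : ℕ} (x : Fin n → Bool) (m : ℕ) : ℕ :=
  (Finset.univ.filter fun i : Fin n => i.val < m ∧ x i).card

/-- `s_n^ψ(x) = (∏_{m=1}^{n-1} (1-ψ_m(s_m(x)))) · ψ_n(s_n(x))`, for a stopping rule `ψ`
based on the sufficient statistic -/
noncomputable def sstop (ψ : ℕ → ℕ → ℝ) (n : ℕ) (x : Fin n → Bool) : ℝ :=
  (∏ m ∈ Finset.range (n - 1), (1 - ψ (m + 1) (prefixCount x (m + 1)))) *
    ψ n (prefixCount x n)

/-- `ψ ∈ 𝒮^N`: the stopping rule is truncated at `N`, i.e.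
`∏_{n=1}^N (1-ψ_n(s_n(x))) = 0` for every `x ∈ {0,1}^N`. -/
def TruncatedAt (ψ : ℕ → ℕ → ℝ) (N : ℕ) : Prop :=
  ∀ x : Fin N → Bool, ∏ n ∈ Finset.range N, (1 - ψ (n + 1) (prefixCount x (n + 1))) = 0

/-- the backward recursion for non-stopping probabilities:
`b_m^m(s;θ) = g_θ^m(s)(1−ψ_m(s))` and, for `n < m`,
`b_n^m(s;θ) = [b_{n+1}^m(s;θ)·(n+1−s)/(n+1) + b_{n+1}^m(s+1;θ)·(s+1)/(n+1)]·(1−ψ_n(s))`. -/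
noncomputable def brec (θ : ℝ) (ψ : ℕ → ℕ → ℝ) (m : ℕ) : ℕ → ℕ → ℝ :=
  fun n s =>
    if _h : n < m then
      (brec θ ψ m (n + 1) s * ((n + 1 - s : ℕ) : ℝ) / (n + 1) +
          brec θ ψ m (n + 1) (s + 1) * ((s + 1 : ℕ) : ℝ) / (n + 1)) *
        (1 - ψ n s)
    else binom θ n s * (1 - ψ n s)
  termination_by n _s => m - n

open Finset

lemma prefixCount_zero {n : ℕ} (x : Fin n → Bool) : prefixCount x 0 = 0 := by
  simp [prefixCount]

lemma prefixCount_le {n : ℕ} (x : Fin n → Bool) (m : ℕ) : prefixCount x m ≤ n :=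
  (card_filter_le _ _).trans (by simp)

lemma prefixCount_cons_succ {d : ℕ} (b : Bool) (y : Fin d → Bool) (k : ℕ) :
    prefixCount (Fin.cons b y : Fin (d + 1) → Bool) (k + 1) = b.toNat + prefixCount y k := by
  unfold prefixCount
  rw [card_filter, card_filter, Fin.sum_univ_succ]
  cases b <;> simp [Fin.cons_succ]

lemma binom_succ_mul_div (θ : ℝ) (n s : ℕ) :
    binom θ (n + 1) s * ((n + 1 - s : ℕ) : ℝ) / (n + 1) = (1 - θ) * binom θ n s := by
  have hchoose : ((n + 1).choose s : ℝ) * ((n + 1 - s : ℕ) : ℝ) = n.choose s * (n + 1) := by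
    exact_mod_cast (Nat.choose_mul_succ_eq n s).symm
  have hpow : (n.choose s : ℝ) * (1 - θ) ^ (n + 1 - s) = n.choose s * (1 - θ) ^ (n - s) * (1 - θ) := by
    rcases le_or_gt s n with hs | hs
    · rw [Nat.sub_add_comm hs, pow_succ, mul_assoc]
    · simp [Nat.choose_eq_zero_of_lt hs]
  unfold binom
  field_simp
  linear_combination θ ^ s * (1 - θ) ^ (n + 1 - s) * hchoose + θ ^ s * (n + 1) * hpow

lemma binom_succ_succ_mul_div (θ : ℝ) (n s : ℕ) :
    binom θ (n + 1) (s + 1) * ((s + 1 : ℕ) : ℝ) / (n + 1) = θ * binom θ n s := by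
  have hchoose : ((n + 1).choose (s + 1) : ℝ) * ((s + 1 : ℕ) : ℝ) = (n + 1) * n.choose s := by
    exact_mod_cast (Nat.add_one_mul_choose_eq n s).symm
  unfold binom
  rw [Nat.add_sub_add_right, pow_succ]
  field_simp
  linear_combination θ ^ s * θ * (1 - θ) ^ (n - s) * hchoose

lemma brec_of_lt {θ : ℝ} {ψ : ℕ → ℕ → ℝ} {m n : ℕ} (h : n < m) (s : ℕ) :
    brec θ ψ m n s =
      (brec θ ψ m (n + 1) s * ((n + 1 - s : ℕ) : ℝ) / (n + 1) +
          brec θ ψ m (n + 1) (s + 1) * ((s + 1 : ℕ) : ℝ) / (n + 1)) * (1 - ψ n s) := by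
  rw [brec, dif_pos h]

lemma brec_self (θ : ℝ) (ψ : ℕ → ℕ → ℝ) (n s : ℕ) :
    brec θ ψ n n s = binom θ n s * (1 - ψ n s) := by
  rw [brec, dif_neg (lt_irrefl n)]

noncomputable def continueWeight (θ : ℝ) (ψ : ℕ → ℕ → ℝ) (n s : ℕ) {d : ℕ} (y : Fin d → Bool) :
    ℝ :=
  (∏ k ∈ range d, (1 - ψ (n + k + 1) (s + prefixCount y (k + 1)))) *
    (θ ^ prefixCount y d * (1 - θ) ^ (d - prefixCount y d))

noncomputable def continueProb (θ : ℝ) (ψ : ℕ → ℕ → ℝ) (n s d : ℕ) : ℝ :=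
  ∑ y : Fin d → Bool, continueWeight θ ψ n s y

lemma continueWeight_cons (θ : ℝ) (ψ : ℕ → ℕ → ℝ) (n s : ℕ) {d : ℕ} (b : Bool)
    (y : Fin d → Bool) :
    continueWeight θ ψ n s (Fin.cons b y : Fin (d + 1) → Bool) =
      (if b then θ else 1 - θ) * (1 - ψ (n + 1) (s + b.toNat)) *
        continueWeight θ ψ (n + 1) (s + b.toNat) y := by
  have hle := prefixCount_le y d
  unfold continueWeight
  simp only [prod_range_succ', prefixCount_cons_succ, prefixCount_zero, add_zero]
  have hprod : ∏ k ∈ range d, (1 - ψ (n + (k + 1) + 1) (s + (b.toNat + prefixCount y (k + 1)))) =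
      ∏ k ∈ range d, (1 - ψ (n + 1 + k + 1) (s + b.toNat + prefixCount y (k + 1))) :=
    prod_congr rfl fun k _ => by rw [add_assoc s, show n + (k + 1) = n + 1 + k by omega]
  rw [hprod]
  cases b
  · rw [Bool.toNat_false, zero_add, Nat.sub_add_comm hle, pow_succ]
    simp only [Bool.false_eq_true, if_false, add_zero]
    ring
  · rw [Bool.toNat_true, add_comm 1, Nat.add_sub_add_right, pow_succ]
    simp only [if_true]
    ring

lemma continueProb_zero (θ : ℝ) (ψ : ℕ → ℕ → ℝ) (n s : ℕ) : continueProb θ ψ n s 0 = 1 := by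
  simp [continueProb, continueWeight, prefixCount_zero]

lemma continueProb_succ (θ : ℝ) (ψ : ℕ → ℕ → ℝ) (n s d : ℕ) :
    continueProb θ ψ n s (d + 1) =
      (1 - θ) * (1 - ψ (n + 1) s) * continueProb θ ψ (n + 1) s d +
        θ * (1 - ψ (n + 1) (s + 1)) * continueProb θ ψ (n + 1) (s + 1) d := by
  rw [continueProb, ← (Fin.consEquiv fun _ : Fin (d + 1) => Bool).sum_comp,
    Fintype.sum_prod_type, Fintype.sum_bool, add_comm]
  simp only [Fin.consEquiv, Equiv.coe_fn_mk, continueWeight_cons, ← mul_sum]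
  simp [continueProb]

theorem brec_eq_binom_mul_continueProb (θ : ℝ) (ψ : ℕ → ℕ → ℝ) (n s d : ℕ) :
    brec θ ψ (n + d) n s = binom θ n s * (1 - ψ n s) * continueProb θ ψ n s d := by
  induction d generalizing n s with
  | zero => rw [add_zero, brec_self, continueProb_zero, mul_one]
  | succ d ih =>
    rw [brec_of_lt (by omega), ← add_assoc, add_right_comm, ih, ih, continueProb_succ]
    linear_combination
      (1 - ψ (n + 1) s) * continueProb θ ψ (n + 1) s d * (1 - ψ n s) *
          binom_succ_mul_div θ n s +
        (1 - ψ (n + 1) (s + 1)) * continueProb θ ψ (n + 1) (s + 1) d * (1 - ψ n s) *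
          binom_succ_succ_mul_div θ n s

theorem stmt3_general (θ : ℝ)
    (m : ℕ) (hm : 1 ≤ m)
    (ψ : ℕ → ℕ → ℝ) :
    brec θ ψ m 1 0 + brec θ ψ m 1 1 =
      ∑ x : Fin m → Bool,
        (∏ n ∈ Finset.range m, (1 - ψ (n + 1) (prefixCount x (n + 1)))) *
          (θ ^ prefixCount x m * (1 - θ) ^ (m - prefixCount x m)) := by
  obtain ⟨d, rfl⟩ : ∃ d, m = d + 1 := ⟨m - 1, by omega⟩
  have hsum : (∑ x : Fin (d + 1) → Bool,
      (∏ n ∈ range (d + 1), (1 - ψ (n + 1) (prefixCount x (n + 1)))) *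
        (θ ^ prefixCount x (d + 1) * (1 - θ) ^ (d + 1 - prefixCount x (d + 1)))) =
      continueProb θ ψ 0 0 (d + 1) := by
    simp only [continueProb, continueWeight, zero_add]
  rw [hsum, continueProb_succ, add_comm d 1, brec_eq_binom_mul_continueProb,
    brec_eq_binom_mul_continueProb]
  simp [binom]

/-- **Proposition 3**: the recursion `b_n^m` computes `P_θ(τ_ψ > m)`, the probability
that the test does not stop at any step `1,…,m`:
`b_1^m(0;θ) + b_1^m(1;θ)
  = Σ_{x∈{0,1}^m} [∏_{n=1}^m (1−ψ_n(s_n(x)))] θ^{s_m(x)}(1−θ)^{m−s_m(x)}`. -/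
theorem stmt3 (θ : ℝ) (hθ : θ ∈ Set.Icc (0 : ℝ) 1)
    (m : ℕ) (hm : 1 ≤ m)
    (ψ : ℕ → ℕ → ℝ) (hψ : ∀ n s, ψ n s ∈ Set.Icc (0 : ℝ) 1) :
    brec θ ψ m 1 0 + brec θ ψ m 1 1 =
      ∑ x : Fin m → Bool,
        (∏ n ∈ Finset.range m, (1 - ψ (n + 1) (prefixCount x (n + 1)))) *
          (θ ^ prefixCount x m * (1 - θ) ^ (m - prefixCount x m)) :=
  stmt3_general θ m hm ψ
end

section
/- (Appendix, equation (9-1).) Let (X, 𝒜, μ) be a σ-finite measure space, k ≥ 2, and let f_1,…,f_k : X → [0,∞) be measurable functions with ∫ f_i dμ = 1 for each i, such that for every i ≠ l the set {x : f_i(x) ≠ f_l(x)} has positive μ-measure. Let λ_{ij} ≥ 0 for 1 ≤ i ≠ j ≤ k. For x = (x_1,…,x_n) ∈ X^n set f_i^n(x) = ∏_{m=1}^n f_i(x_m) and v_n(x) = min_{1≤j≤k} Σ_{i≠j} λ_{ij} f_i^n(x). Then ∫_{X^n} v_n dμ^n → 0 as n → ∞, where μ^n denotes the n-fold product measure. 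-/
open scoped BigOperators
open MeasureTheory Filter

/-!
Two probability densities that differ on a set of positive measure have Bhattacharyya
coefficient `ρ = ∫ √(f g) dμ < 1`, by strict AM-GM on that set. Evaluating the infimum at the
index `j` maximising `f_j^n(x)` gives `v_n(x) ≤ ∑_j ∑_{i ≠ j} λ_{ij} √(f_i^n(x) f_j^n(x))`, and
the integral of `√(f_i^n f_j^n)` over `X^n` factorises as `ρ_{ij}^n → 0`.
-/

open Finset

namespace Real

theorem sqrt_mul_le_add_div_two {a b : ℝ} (ha : 0 ≤ a) (hb : 0 ≤ b) :
    √(a * b) ≤ (a + b) / 2 :=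
  sqrt_le_iff.2 ⟨by positivity, by nlinarith [sq_nonneg (a - b)]⟩

theorem sqrt_mul_lt_add_div_two {a b : ℝ} (ha : 0 ≤ a) (hb : 0 ≤ b) (hab : a ≠ b) :
    √(a * b) < (a + b) / 2 :=
  calc √(a * b) < √(((a + b) / 2) ^ 2) :=
        sqrt_lt_sqrt (mul_nonneg ha hb) (by nlinarith [sq_pos_of_ne_zero (sub_ne_zero.2 hab)])
    _ = (a + b) / 2 := sqrt_sq (by positivity)

end Real

theorem iInf_sum_le_sum_sum_sqrt {ι : Type*} [Fintype ι] (s : ι → Finset ι)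
    (lam : ι → ι → ℝ) (hlam : ∀ i j, 0 ≤ lam i j) (F : ι → ℝ) (hF : ∀ i, 0 ≤ F i) :
    ⨅ j, ∑ i ∈ s j, lam i j * F i ≤ ∑ j, ∑ i ∈ s j, lam i j * √(F i * F j) := by
  have hsum_nonneg : ∀ j, 0 ≤ ∑ i ∈ s j, lam i j * √(F i * F j) := fun j =>
    sum_nonneg fun i _ => mul_nonneg (hlam i j) (Real.sqrt_nonneg _)
  cases isEmpty_or_nonempty ι
  · simp [Real.iInf_of_isEmpty]
  obtain ⟨j₀, -, hj₀⟩ := exists_max_image univ F univ_nonempty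
  have hF_le : ∀ i, F i ≤ √(F i * F j₀) := fun i =>
    Real.le_sqrt_of_sq_le (by nlinarith [hF i, hj₀ i (mem_univ i)])
  calc ⨅ j, ∑ i ∈ s j, lam i j * F i
      ≤ ∑ i ∈ s j₀, lam i j₀ * F i := ciInf_le (Set.finite_range _).bddBelow j₀
    _ ≤ ∑ i ∈ s j₀, lam i j₀ * √(F i * F j₀) :=
      sum_le_sum fun i _ => mul_le_mul_of_nonneg_left (hF_le i) (hlam i j₀)
    _ ≤ ∑ j, ∑ i ∈ s j, lam i j * √(F i * F j) :=
      single_le_sum (f := fun j => ∑ i ∈ s j, lam i j * √(F i * F j))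
        (fun j _ => hsum_nonneg j) (mem_univ j₀)

section Bhattacharyya

variable {X : Type*} [MeasurableSpace X] {μ : Measure X} {f g : X → ℝ}

noncomputable def bhattacharyya (μ : Measure X) (f g : X → ℝ) : ℝ :=
  ∫ x, √(f x * g x) ∂μ

theorem bhattacharyya_nonneg : 0 ≤ bhattacharyya μ f g :=
  integral_nonneg fun _ => Real.sqrt_nonneg _

theorem integrable_sqrt_mul (hf : Integrable f μ) (hg : Integrable g μ)
    (hf₀ : ∀ x, 0 ≤ f x) (hg₀ : ∀ x, 0 ≤ g x) : Integrable (fun x => √(f x * g x)) μ := by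
  refine ((hf.add hg).div_const 2).mono
    (Real.continuous_sqrt.comp_aestronglyMeasurable (hf.1.mul hg.1)) (ae_of_all _ fun x => ?_)
  rw [Pi.add_apply, Real.norm_of_nonneg (Real.sqrt_nonneg _),
    Real.norm_of_nonneg (div_nonneg (add_nonneg (hf₀ x) (hg₀ x)) zero_le_two)]
  exact Real.sqrt_mul_le_add_div_two (hf₀ x) (hg₀ x)

theorem bhattacharyya_lt_one (hf₀ : ∀ x, 0 ≤ f x) (hg₀ : ∀ x, 0 ≤ g x)
    (hf : ∫ x, f x ∂μ = 1) (hg : ∫ x, g x ∂μ = 1) (hfg : 0 < μ {x | f x ≠ g x}) :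
    bhattacharyya μ f g < 1 := by
  have hf_int : Integrable f μ := .of_integral_ne_zero (by simp [hf])
  have hg_int : Integrable g μ := .of_integral_ne_zero (by simp [hg])
  have havg_int : Integrable (fun x => (f x + g x) / 2) μ := (hf_int.add hg_int).div_const 2
  have hgap_int : Integrable (fun x => (f x + g x) / 2 - √(f x * g x)) μ :=
    havg_int.sub (integrable_sqrt_mul hf_int hg_int hf₀ hg₀)
  have hgap_nonneg : ∀ x, 0 ≤ (f x + g x) / 2 - √(f x * g x) := fun x =>
    sub_nonneg.2 (Real.sqrt_mul_le_add_div_two (hf₀ x) (hg₀ x))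
  -- AM-GM is strict exactly where `f ≠ g`, a set of positive measure.
  have hgap_pos : 0 < ∫ x, ((f x + g x) / 2 - √(f x * g x)) ∂μ := by
    refine (integral_pos_iff_support_of_nonneg hgap_nonneg hgap_int).2
      (hfg.trans_le (measure_mono fun x hx => ?_))
    exact (sub_pos.2 (Real.sqrt_mul_lt_add_div_two (hf₀ x) (hg₀ x) hx)).ne'
  rw [integral_sub havg_int (integrable_sqrt_mul hf_int hg_int hf₀ hg₀), integral_div,
    integral_add hf_int hg_int, hf, hg] at hgap_pos
  unfold bhattacharyya
  linarith

theorem integral_pi_prod_sqrt_mul [SigmaFinite μ] (n : ℕ) :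
    ∫ x : Fin n → X, ∏ m, √(f (x m) * g (x m)) ∂(Measure.pi fun _ => μ) =
      bhattacharyya μ f g ^ n := by
  rw [integral_fintype_prod_eq_pow (fun y => √(f y * g y)), Fintype.card_fin, bhattacharyya]

end Bhattacharyya

theorem integral_iInf_sum_prod_le {X : Type*} [MeasurableSpace X] (μ : Measure X) [SigmaFinite μ]
    {ι : Type*} [Fintype ι] (s : ι → Finset ι) (f : ι → X → ℝ)
    (hf₀ : ∀ i x, 0 ≤ f i x) (hf : ∀ i, Integrable (f i) μ)
    (lam : ι → ι → ℝ) (hlam : ∀ i j, 0 ≤ lam i j) (n : ℕ) :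
    ∫ x : Fin n → X, (⨅ j, ∑ i ∈ s j, lam i j * ∏ m, f i (x m)) ∂(Measure.pi fun _ => μ) ≤
      ∑ j, ∑ i ∈ s j, lam i j * bhattacharyya μ (f i) (f j) ^ n := by
  have hprod_int : ∀ i j, Integrable (fun x : Fin n → X => ∏ m, √(f i (x m) * f j (x m)))
      (Measure.pi fun _ => μ) := fun i j =>
    .fintype_prod fun _ => integrable_sqrt_mul (hf i) (hf j) (hf₀ i) (hf₀ j)
  have hbound : ∀ x : Fin n → X, ⨅ j, ∑ i ∈ s j, lam i j * ∏ m, f i (x m) ≤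
      ∑ j, ∑ i ∈ s j, lam i j * ∏ m, √(f i (x m) * f j (x m)) := fun x => by
    have := iInf_sum_le_sum_sum_sqrt s lam hlam (fun i => ∏ m, f i (x m))
      (fun i => prod_nonneg fun m _ => hf₀ i (x m))
    simpa only [← prod_mul_distrib, Real.sqrt_prod _ fun m _ => mul_nonneg (hf₀ _ _) (hf₀ _ _)]
      using this
  calc _ ≤ ∫ x : Fin n → X, ∑ j, ∑ i ∈ s j, lam i j * ∏ m, √(f i (x m) * f j (x m))
          ∂(Measure.pi fun _ => μ) :=
        integral_mono_of_nonneg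
          (ae_of_all _ fun x => Real.iInf_nonneg fun j => sum_nonneg fun i _ =>
            mul_nonneg (hlam i j) (prod_nonneg fun m _ => hf₀ i (x m)))
          (integrable_finsetSum _ fun j _ => integrable_finsetSum _ fun i _ =>
            (hprod_int i j).const_mul _)
          (ae_of_all _ hbound)
    _ = ∑ j, ∑ i ∈ s j, lam i j * bhattacharyya μ (f i) (f j) ^ n := by
        rw [integral_finsetSum _ fun j _ => integrable_finsetSum _ fun i _ =>
          (hprod_int i j).const_mul _]
        refine sum_congr rfl fun j _ => ?_
        rw [integral_finsetSum _ fun i _ => (hprod_int i j).const_mul _]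
        simp only [integral_const_mul, integral_pi_prod_sqrt_mul]

theorem stmt7_general {X : Type*} [MeasurableSpace X] (μ : Measure X) [SigmaFinite μ]
    (k : ℕ) (f : Fin k → X → ℝ)
    (hnonneg : ∀ i x, 0 ≤ f i x)
    (hint : ∀ i, ∫ x, f i x ∂μ = 1)
    (hdiff : ∀ i l, i ≠ l → 0 < μ {x | f i x ≠ f l x})
    (lam : Fin k → Fin k → ℝ) (hlam : ∀ i j, 0 ≤ lam i j) :
    Tendsto
      (fun n : ℕ =>
        ∫ x : Fin n → X,
          (⨅ j : Fin k, ∑ i ∈ Finset.univ.filter (· ≠ j), lam i j * ∏ m, f i (x m))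
            ∂(Measure.pi fun _ : Fin n => μ))
      atTop (nhds 0) := by
  have hf : ∀ i, Integrable (f i) μ := fun i => .of_integral_ne_zero (by simp [hint i])
  have hbound_tendsto : Tendsto (fun n : ℕ => ∑ j, ∑ i ∈ univ.filter (· ≠ j),
      lam i j * bhattacharyya μ (f i) (f j) ^ n) atTop (nhds 0) := by
    rw [show (0 : ℝ) = ∑ j : Fin k, ∑ i ∈ univ.filter (· ≠ j), lam i j * 0 by simp]
    refine tendsto_finsetSum _ fun j _ => tendsto_finsetSum _ fun i hi => ?_
    exact (tendsto_pow_atTop_nhds_zero_of_lt_one bhattacharyya_nonneg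
      (bhattacharyya_lt_one (hnonneg i) (hnonneg j) (hint i) (hint j)
        (hdiff i j (mem_filter.1 hi).2))).const_mul _
  refine squeeze_zero (fun n => integral_nonneg fun x => ?_)
    (integral_iInf_sum_prod_le μ _ f hnonneg hf lam hlam) hbound_tendsto
  exact Real.iInf_nonneg fun j => sum_nonneg fun i _ =>
    mul_nonneg (hlam i j) (prod_nonneg fun m _ => hnonneg i (x m))

/-- **Equation (9-1), Appendix**: if `f_1,…,f_k` are probability densities with respect
to a σ-finite measure `μ`, pairwise different on a set of positive measure, and
`λ_{ij} ≥ 0`, then with `f_i^n(x) = ∏_{m=1}^n f_i(x_m)` and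
`v_n(x) = min_{1≤j≤k} Σ_{i≠j} λ_{ij} f_i^n(x)`, one has `∫_{X^n} v_n dμ^n → 0` as
`n → ∞`. -/
theorem stmt7 {X : Type*} [MeasurableSpace X] (μ : Measure X) [SigmaFinite μ]
    (k : ℕ) (hk : 2 ≤ k) (f : Fin k → X → ℝ)
    (hmeas : ∀ i, Measurable (f i)) (hnonneg : ∀ i x, 0 ≤ f i x)
    (hint : ∀ i, ∫ x, f i x ∂μ = 1)
    (hdiff : ∀ i l, i ≠ l → 0 < μ {x | f i x ≠ f l x})
    (lam : Fin k → Fin k → ℝ) (hlam : ∀ i j, 0 ≤ lam i j) :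
    Tendsto
      (fun n : ℕ =>
        ∫ x : Fin n → X,
          (⨅ j : Fin k, ∑ i ∈ Finset.univ.filter (· ≠ j), lam i j * ∏ m, f i (x m))
            ∂(Measure.pi fun _ : Fin n => μ))
      atTop (nhds 0) :=
  stmt7_general μ k f hnonneg hint hdiff lam hlam
end

section
/- Let k ≥ 2, let θ_1,…,θ_k ∈ [0,1] be pairwise distinct, and let λ_{ij} ≥ 0 for 1 ≤ i ≠ j ≤ k. Then Σ_{s=0}^n min_{1≤j≤k} Σ_{i≠j} λ_{ij} C(n,s) θ_i^s (1−θ_i)^{n−s} → 0 as n → ∞. (Bernoulli instance of equation (9-1): the integral of v_n equals the sum over s of u_n(s).) -/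
open scoped BigOperators
open Filter

/-!
At each `s`, choose `m` maximising `g_{θ_m}^n(s)`; the minimum over `j` is at most the value at
`j = m`, where every `g_{θ_i}^n(s)` may be replaced by `min (g_{θ_i}^n(s)) (g_{θ_m}^n(s))`. Hence the
sum is dominated by a fixed combination of the overlaps `Σ_s min (g_p^n(s)) (g_q^n(s))` with
`p ≠ q`. Since `(n p - s) - (n q - s) = n (p - q)`, Chebyshev's inequality for the two binomial
laws bounds such an overlap by `1 / (n (p - q)²)`.
-/

noncomputable def binomialWeight (θ : ℝ) (n s : ℕ) : ℝ :=
  (n.choose s : ℝ) * θ ^ s * (1 - θ) ^ (n - s)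

lemma binomialWeight_nonneg {θ : ℝ} (hθ : θ ∈ Set.Icc (0 : ℝ) 1) (n s : ℕ) :
    0 ≤ binomialWeight θ n s := by
  have : 0 ≤ 1 - θ := sub_nonneg.mpr hθ.2
  have := hθ.1
  unfold binomialWeight
  positivity

lemma sum_sq_sub_mul_binomialWeight (θ : ℝ) (n : ℕ) :
    ∑ s ∈ Finset.range (n + 1), ((n : ℝ) * θ - s) ^ 2 * binomialWeight θ n s =
      n * θ * (1 - θ) := by
  simpa [Polynomial.eval_finsetSum, bernsteinPolynomial, binomialWeight, nsmul_eq_mul,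
    mul_comm, mul_assoc, mul_left_comm] using
    congrArg (Polynomial.eval θ) (bernsteinPolynomial.variance ℝ n)

lemma sq_sub_mul_min_le {x y u v : ℝ} (hu : 0 ≤ u) (hv : 0 ≤ v) :
    (x - y) ^ 2 * min u v ≤ 2 * (x ^ 2 * u + y ^ 2 * v) := by
  have hmin : 0 ≤ min u v := le_min hu hv
  calc (x - y) ^ 2 * min u v ≤ (2 * x ^ 2 + 2 * y ^ 2) * min u v := by
        gcongr; nlinarith [sq_nonneg (x + y)]
    _ ≤ 2 * (x ^ 2 * u + y ^ 2 * v) := by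
        nlinarith [min_le_left u v, min_le_right u v, sq_nonneg x, sq_nonneg y,
          mul_nonneg (sq_nonneg x) hmin, mul_nonneg (sq_nonneg y) hmin]

noncomputable def binomialOverlap (p q : ℝ) (n : ℕ) : ℝ :=
  ∑ s ∈ Finset.range (n + 1), min (binomialWeight p n s) (binomialWeight q n s)

lemma binomialOverlap_nonneg {p q : ℝ} (hp : p ∈ Set.Icc (0 : ℝ) 1)
    (hq : q ∈ Set.Icc (0 : ℝ) 1) (n : ℕ) : 0 ≤ binomialOverlap p q n :=
  Finset.sum_nonneg fun s _ => le_min (binomialWeight_nonneg hp n s) (binomialWeight_nonneg hq n s)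

lemma mul_binomialOverlap_le_one {p q : ℝ} (hp : p ∈ Set.Icc (0 : ℝ) 1)
    (hq : q ∈ Set.Icc (0 : ℝ) 1) (n : ℕ) :
    n * (p - q) ^ 2 * binomialOverlap p q n ≤ 1 := by
  have hpointwise : ∀ s : ℕ, ((n : ℝ) * (p - q)) ^ 2 *
      min (binomialWeight p n s) (binomialWeight q n s) ≤
      2 * (((n : ℝ) * p - s) ^ 2 * binomialWeight p n s +
        ((n : ℝ) * q - s) ^ 2 * binomialWeight q n s) := fun s => by
    have := sq_sub_mul_min_le (x := (n : ℝ) * p - s) (y := (n : ℝ) * q - s)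
      (binomialWeight_nonneg hp n s) (binomialWeight_nonneg hq n s)
    rwa [show (n : ℝ) * p - s - ((n : ℝ) * q - s) = n * (p - q) by ring] at this
  have hsum := Finset.sum_le_sum fun s (_ : s ∈ Finset.range (n + 1)) => hpointwise s
  rw [← Finset.mul_sum, ← Finset.mul_sum, ← binomialOverlap, Finset.sum_add_distrib,
    sum_sq_sub_mul_binomialWeight, sum_sq_sub_mul_binomialWeight] at hsum
  have hvar : 2 * ((n : ℝ) * p * (1 - p) + n * q * (1 - q)) ≤ n := by
    have hn : (0 : ℝ) ≤ n := n.cast_nonneg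
    nlinarith [mul_nonneg hn (sq_nonneg (2 * p - 1)), mul_nonneg hn (sq_nonneg (2 * q - 1))]
  rcases n.eq_zero_or_pos with rfl | hn
  · simp
  have hn' : (0 : ℝ) < n := by exact_mod_cast hn
  refine le_of_mul_le_mul_left ?_ hn'
  nlinarith [hsum.trans hvar]

lemma tendsto_binomialOverlap {p q : ℝ} (hp : p ∈ Set.Icc (0 : ℝ) 1)
    (hq : q ∈ Set.Icc (0 : ℝ) 1) (hpq : p ≠ q) :
    Tendsto (binomialOverlap p q) atTop (nhds 0) := by
  refine squeeze_zero' (Eventually.of_forall (binomialOverlap_nonneg hp hq)) ?_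
    (tendsto_const_div_atTop_nhds_zero_nat ((p - q) ^ 2)⁻¹)
  filter_upwards [eventually_gt_atTop 0] with n hn
  have hd : 0 < (n : ℝ) * (p - q) ^ 2 := by
    have := sub_ne_zero.mpr hpq
    positivity
  rw [show ((p - q) ^ 2)⁻¹ / n = 1 / (n * (p - q) ^ 2) by field_simp, le_div_iff₀' hd]
  exact mul_binomialOverlap_le_one hp hq n

lemma iInf_sum_ne_le_sum_sum_ne_min {ι : Type*} [Fintype ι] [DecidableEq ι] [Nonempty ι]
    {lam : ι → ι → ℝ} {g : ι → ℝ} (hlam : ∀ i j, 0 ≤ lam i j) (hg : ∀ i, 0 ≤ g i) :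
    ⨅ j, ∑ i ∈ Finset.univ.filter (· ≠ j), lam i j * g i ≤
      ∑ j, ∑ i ∈ Finset.univ.filter (· ≠ j), lam i j * min (g i) (g j) := by
  obtain ⟨m, -, hm⟩ := Finset.exists_max_image Finset.univ g Finset.univ_nonempty
  calc ⨅ j, ∑ i ∈ Finset.univ.filter (· ≠ j), lam i j * g i
      ≤ ∑ i ∈ Finset.univ.filter (· ≠ m), lam i m * g i :=
        ciInf_le (Set.finite_range _).bddBelow m
    _ = ∑ i ∈ Finset.univ.filter (· ≠ m), lam i m * min (g i) (g m) :=
        Finset.sum_congr rfl fun i _ => by rw [min_eq_left (hm i (Finset.mem_univ i))]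
    _ ≤ ∑ j, ∑ i ∈ Finset.univ.filter (· ≠ j), lam i j * min (g i) (g j) :=
        Finset.single_le_sum (f := fun j => ∑ i ∈ Finset.univ.filter (· ≠ j),
            lam i j * min (g i) (g j))
          (fun j _ => Finset.sum_nonneg fun i _ => mul_nonneg (hlam i j) (le_min (hg i) (hg j)))
          (Finset.mem_univ m)

/-- **Bernoulli instance of equation (9-1)**: for pairwise distinct
`θ_1,…,θ_k ∈ [0,1]` and `λ_{ij} ≥ 0`,
`Σ_{s=0}^n min_{1≤j≤k} Σ_{i≠j} λ_{ij} C(n,s) θ_i^s (1−θ_i)^{n−s} → 0` as `n → ∞`. -/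
theorem stmt8 (k : ℕ) (hk : 2 ≤ k) (θs : Fin k → ℝ)
    (hθ : ∀ i, θs i ∈ Set.Icc (0 : ℝ) 1)
    (hdist : Function.Injective θs)
    (lam : Fin k → Fin k → ℝ) (hlam : ∀ i j, 0 ≤ lam i j) :
    Tendsto
      (fun n : ℕ =>
        ∑ s ∈ Finset.range (n + 1),
          ⨅ j : Fin k, ∑ i ∈ Finset.univ.filter (· ≠ j),
            lam i j * ((n.choose s : ℝ) * θs i ^ s * (1 - θs i) ^ (n - s)))
      atTop (nhds 0) := by
  have : Nonempty (Fin k) := ⟨⟨0, by omega⟩⟩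
  set bound := fun n =>
    ∑ j, ∑ i ∈ Finset.univ.filter (· ≠ j), lam i j * binomialOverlap (θs i) (θs j) n
  have hbound : ∀ n : ℕ,
      ∑ s ∈ Finset.range (n + 1), ⨅ j, ∑ i ∈ Finset.univ.filter (· ≠ j),
        lam i j * binomialWeight (θs i) n s ≤ bound n := fun n => by
    refine (Finset.sum_le_sum fun s _ => iInf_sum_ne_le_sum_sum_ne_min hlam
      fun i => binomialWeight_nonneg (hθ i) n s).trans_eq ?_
    simp only [bound, binomialOverlap, Finset.mul_sum]
    rw [Finset.sum_comm]
    exact Finset.sum_congr rfl fun j _ => Finset.sum_comm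
  have hlim : Tendsto bound atTop (nhds 0) := by
    rw [show (0 : ℝ) = ∑ j : Fin k, ∑ i ∈ Finset.univ.filter (· ≠ j), lam i j * 0 by simp]
    refine tendsto_finsetSum _ fun j _ => tendsto_finsetSum _ fun i hi => ?_
    have hij : θs i ≠ θs j := hdist.ne (Finset.mem_filter.mp hi).2
    exact (tendsto_binomialOverlap (hθ i) (hθ j) hij).const_mul (lam i j)
  exact squeeze_zero (fun n => Finset.sum_nonneg fun s _ => Real.iInf_nonneg fun j =>
    Finset.sum_nonneg fun i _ => mul_nonneg (hlam i j) (binomialWeight_nonneg (hθ i) n s))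
    hbound hlim
end

section
/- For the Bernoulli model, the backward-induction values are monotone in the truncation level: for every N ≥ 2, every n = 1,…,N, and every x ∈ {0,1}^n, one has V_n^{N+1}(x) ≤ V_n^N(x); consequently the limit V_n(x) = lim_{N→∞} V_n^N(x) exists. -/
open scoped BigOperators
open Filter

/-!
Passing from truncation level `N` to `N + 1` changes the terminal value `v_N` into
`min(v_N, …) ≤ v_N`, and the recursion is monotone in its continuation values, so backward
induction gives `V^{N+1} ≤ V^N` at every stage. All values are nonnegative, so for fixed `n, x`
the sequence `N ↦ V_n^N(x)` is antitone and bounded below, hence convergent.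
-/

lemma fpow_nonneg {θ : ℝ} (hθ : θ ∈ Set.Icc (0 : ℝ) 1) (n : ℕ) (x : Fin n → Bool) :
    0 ≤ fpow θ n x :=
  mul_nonneg (pow_nonneg hθ.1 _) (pow_nonneg (sub_nonneg.2 hθ.2) _)

lemma vfun_nonneg {k : ℕ} {θs : Fin k → ℝ} (hθ : ∀ i, θs i ∈ Set.Icc (0 : ℝ) 1)
    {lam : Fin k → Fin k → ℝ} (hlam : ∀ i j, 0 ≤ lam i j) (n : ℕ) (x : Fin n → Bool) :
    0 ≤ vfun k θs lam n x :=
  Real.iInf_nonneg fun j => Finset.sum_nonneg fun i _ =>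
    mul_nonneg (hlam i j) (fpow_nonneg (hθ i) n x)

lemma fmix_nonneg {K : ℕ} {γ ϑ : Fin K → ℝ} (hγ : ∀ i, 0 ≤ γ i)
    (hϑ : ∀ i, ϑ i ∈ Set.Icc (0 : ℝ) 1) (n : ℕ) (x : Fin n → Bool) :
    0 ≤ fmix K γ ϑ n x :=
  Finset.sum_nonneg fun i _ => mul_nonneg (hγ i) (fpow_nonneg (hϑ i) n x)

namespace V

variable {k : ℕ} {θs : Fin k → ℝ} {lam : Fin k → Fin k → ℝ} {K : ℕ} {γ ϑ : Fin K → ℝ}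
  {N n : ℕ}

lemma eq_of_lt (h : n < N) (x : Fin n → Bool) :
    V k θs lam K γ ϑ N n x =
      min (vfun k θs lam n x)
        (fmix K γ ϑ n x +
          (V k θs lam K γ ϑ N (n + 1) (Fin.snoc x false) +
            V k θs lam K γ ϑ N (n + 1) (Fin.snoc x true))) := by
  rw [V, dif_pos h]

lemma eq_vfun_of_le (h : N ≤ n) (x : Fin n → Bool) :
    V k θs lam K γ ϑ N n x = vfun k θs lam n x := by
  rw [V, dif_neg (not_lt.2 h)]

lemma le_vfun (x : Fin n → Bool) : V k θs lam K γ ϑ N n x ≤ vfun k θs lam n x := by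
  rcases lt_or_ge n N with h | h
  · exact (eq_of_lt h x).trans_le (min_le_left _ _)
  · exact (eq_vfun_of_le h x).le

lemma nonneg (hv : ∀ n x, 0 ≤ vfun k θs lam n x) (hf : ∀ n x, 0 ≤ fmix K γ ϑ n x)
    (N n : ℕ) (x : Fin n → Bool) : 0 ≤ V k θs lam K γ ϑ N n x := by
  rcases lt_or_ge n N with h | h
  · rw [eq_of_lt h]
    exact le_min (hv n x) <| add_nonneg (hf n x) <|
      add_nonneg (nonneg hv hf N (n + 1) _) (nonneg hv hf N (n + 1) _)
  · rw [eq_vfun_of_le h]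
    exact hv n x
termination_by N - n

lemma succ_le (N n : ℕ) (x : Fin n → Bool) :
    V k θs lam K γ ϑ (N + 1) n x ≤ V k θs lam K γ ϑ N n x := by
  rcases lt_or_ge n N with h | h
  · rw [eq_of_lt h, eq_of_lt (h.trans N.lt_succ_self)]
    gcongr <;> exact succ_le N (n + 1) _
  · rw [eq_vfun_of_le h]
    exact le_vfun x
termination_by N - n

lemma antitone (n : ℕ) (x : Fin n → Bool) :
    Antitone fun N => V k θs lam K γ ϑ N n x :=
  antitone_nat_of_succ_le fun N => succ_le N n x

lemma exists_tendsto (hv : ∀ n x, 0 ≤ vfun k θs lam n x) (hf : ∀ n x, 0 ≤ fmix K γ ϑ n x)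
    (n : ℕ) (x : Fin n → Bool) :
    ∃ L : ℝ, Tendsto (fun N => V k θs lam K γ ϑ N n x) atTop (nhds L) :=
  ⟨_, tendsto_atTop_ciInf (antitone n x) ⟨0, Set.forall_mem_range.2 fun N => nonneg hv hf N n x⟩⟩

end V

theorem stmt12_general (k : ℕ) (θs : Fin k → ℝ)
    (hθ : ∀ i, θs i ∈ Set.Icc (0 : ℝ) 1)
    (lam : Fin k → Fin k → ℝ) (hlam : ∀ i j, 0 ≤ lam i j)
    (K : ℕ) (γ ϑ : Fin K → ℝ)
    (hγ : ∀ i, 0 ≤ γ i)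
    (hϑ : ∀ i, ϑ i ∈ Set.Icc (0 : ℝ) 1) :
    (∀ N : ℕ, 2 ≤ N → ∀ n : ℕ, 1 ≤ n → n ≤ N → ∀ x : Fin n → Bool,
        V k θs lam K γ ϑ (N + 1) n x ≤ V k θs lam K γ ϑ N n x) ∧
      (∀ n : ℕ, 1 ≤ n → ∀ x : Fin n → Bool,
        ∃ L : ℝ, Tendsto (fun N : ℕ => V k θs lam K γ ϑ N n x) atTop (nhds L)) :=
  ⟨fun N _ n _ _ x => V.succ_le N n x, fun n _ x =>
    V.exists_tendsto (vfun_nonneg hθ hlam) (fmix_nonneg hγ hϑ) n x⟩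

/-- **Monotonicity in the truncation level**: for every `N ≥ 2`, `n = 1,…,N` and
`x ∈ {0,1}^n`, `V_n^{N+1}(x) ≤ V_n^N(x)`; consequently the limit
`V_n(x) = lim_{N→∞} V_n^N(x)` exists. -/
theorem stmt12 (k : ℕ) (hk : 2 ≤ k) (θs : Fin k → ℝ)
    (hθ : ∀ i, θs i ∈ Set.Icc (0 : ℝ) 1)
    (lam : Fin k → Fin k → ℝ) (hlam : ∀ i j, 0 ≤ lam i j)
    (K : ℕ) (hK : 1 ≤ K) (γ ϑ : Fin K → ℝ)
    (hγ : ∀ i, 0 ≤ γ i) (hγ1 : ∑ i, γ i = 1)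
    (hϑ : ∀ i, ϑ i ∈ Set.Icc (0 : ℝ) 1) :
    (∀ N : ℕ, 2 ≤ N → ∀ n : ℕ, 1 ≤ n → n ≤ N → ∀ x : Fin n → Bool,
        V k θs lam K γ ϑ (N + 1) n x ≤ V k θs lam K γ ϑ N n x) ∧
      (∀ n : ℕ, 1 ≤ n → ∀ x : Fin n → Bool,
        ∃ L : ℝ, Tendsto (fun N : ℕ => V k θs lam K γ ϑ N n x) atTop (nhds L)) :=
  stmt12_general k θs hθ lam hlam K γ ϑ hγ hϑ
end

section
/- (Attainment of the truncated lower bound by the optimal test (3-4)–(3-5).) Define the test ⟨ψ*,φ*⟩ based on the sufficient statistic as follows: for each n and s, φ*_n picks (deterministically, say the smallest) an index j attaining min_{1≤j≤k} Σ_{i≠j} λ_{ij} g_{θ_i}^n(s) = u_n(s); ψ*_n(s) = 1 if u_n(s) ≤ g_{γϑ}^n(s) + (𝒥_{n+1}U_{n+1}^N)(s) and ψ*_n(s) = 0 otherwise, for n = 1,…,N−1, and ψ*_N ≡ 1. Then ψ* ∈ 𝒮^N and the Lagrangian L(ψ*,φ*) = Σ_{n=1}^N Σ_{x∈{0,1}^n}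 s_n^{ψ*}(x) [ n·f_{γϑ}^n(x) + Σ_{j=1}^k φ*_n{}^j(s_n(x)) Σ_{i≠j} λ_{ij} f_{θ_i}^n(x) ] equals 1 + U_1^N(0) + U_1^N(1), so ⟨ψ*,φ*⟩ minimizes the Lagrangian among all tests based on the sufficient statistic truncated at N. -/
open scoped BigOperators

/-- the Lagrangian of a truncated test `⟨ψ,φ⟩` based on the sufficient statistic:
`L(ψ,φ) = Σ_{n=1}^N Σ_{x∈{0,1}^n} s_n^ψ(x)
  [ n·f_{γϑ}^n(x) + Σ_{j=1}^k φ_n^j(s_n(x)) Σ_{i≠j} λ_{ij} f_{θ_i}^n(x) ]`. -/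
noncomputable def Lagr (k : ℕ) (θs : Fin k → ℝ) (lam : Fin k → Fin k → ℝ)
    (K : ℕ) (γ ϑ : Fin K → ℝ) (N : ℕ)
    (ψ : ℕ → ℕ → ℝ) (φ : ℕ → ℕ → Fin k → ℝ) : ℝ :=
  ∑ n ∈ Finset.Icc 1 N, ∑ x : Fin n → Bool,
    sstop ψ n x *
      ((n : ℝ) * fmix K γ ϑ n x +
        ∑ j : Fin k, φ n (prefixCount x n) j *
          ∑ i ∈ Finset.univ.filter (· ≠ j), lam i j * fpow (θs i) n x)

open Classical in
/-- the optimal stopping rule (3-5): for `n = 1,…,N−1`, `ψ*_n(s) = 1` if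
`u_n(s) ≤ g_{γϑ}^n(s) + (𝒥_{n+1}U_{n+1}^N)(s)` and `ψ*_n(s) = 0` otherwise, and
`ψ*_N ≡ 1`. -/
noncomputable def psiStar (k : ℕ) (θs : Fin k → ℝ) (lam : Fin k → Fin k → ℝ)
    (K : ℕ) (γ ϑ : Fin K → ℝ) (N : ℕ) : ℕ → ℕ → ℝ :=
  fun n s =>
    if n < N then
      if ufun k θs lam n s ≤
          gmix K γ ϑ n s +
            (U k θs lam K γ ϑ N (n + 1) s * ((n + 1 - s : ℕ) : ℝ) / (n + 1) +
              U k θs lam K γ ϑ N (n + 1) (s + 1) * ((s + 1 : ℕ) : ℝ) / (n + 1)) then 1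
      else 0
    else 1

/-!
Dividing `U_n^N(s)` by `C(n,s)` gives a value per sample path, for which `𝒥_{n+1}` becomes the
sum over the two one-step continuations of the path. Splitting the Lagrangian of a test at each
stage turns it into a backward recursion over the binary tree of sample paths. At every node
the recursion for `⟨ψ*,φ*⟩` reproduces the per-path value plus the sampling cost already spent,
because `ψ*` follows the smaller branch of the minimum and `φ*` attains the minimum over `j`.
For any other truncated test, the node's contribution weighted by the probability of
reaching it is at least as large: a convex combination of the two branches of a minimum
dominates the minimum.
-/

open Finset

lemma min_le_mul_add_one_sub_mul {a b t : ℝ} (ht : t ∈ Set.Icc (0 : ℝ) 1) :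
    min a b ≤ t * a + (1 - t) * b := by
  nlinarith [min_le_left a b, min_le_right a b, ht.1, ht.2]

section Paths

variable {n : ℕ}

lemma count_le (x : Fin n → Bool) : count x ≤ n :=
  (card_filter_le _ _).trans_eq (card_fin n)

lemma prefixCount_self (x : Fin n → Bool) : prefixCount x n = count x := by
  simp [prefixCount, count]

lemma count_snoc (x : Fin n → Bool) (b : Bool) :
    count (Fin.snoc x b : Fin (n + 1) → Bool) = count x + b.toNat := by
  rw [count, count, card_filter, card_filter, Fin.sum_univ_castSucc]
  cases b <;> simp

lemma prefixCount_snoc {m : ℕ} (x : Fin n → Bool) (b : Bool) (h : m ≤ n) :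
    prefixCount (Fin.snoc x b : Fin (n + 1) → Bool) m = prefixCount x m := by
  rw [prefixCount, prefixCount, card_filter, card_filter, Fin.sum_univ_castSucc]
  simp [Nat.not_lt.2 h]

lemma sum_eq_sum_snoc {α M : Type*} [Fintype α] [AddCommMonoid M]
    (F : (Fin (n + 1) → α) → M) :
    ∑ z, F z = ∑ x : Fin n → α, ∑ a, F (Fin.snoc x a) := by
  rw [← (Fin.snocEquiv fun _ => α).sum_comp, Fintype.sum_prod_type, sum_comm]
  rfl

end Paths

section PathValue

variable {k : ℕ} {θs : Fin k → ℝ} {lam : Fin k → Fin k → ℝ} {K : ℕ} {γ ϑ : Fin K → ℝ} {N : ℕ}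

noncomputable def pathProb (θ : ℝ) (n s : ℕ) : ℝ :=
  θ ^ s * (1 - θ) ^ (n - s)

noncomputable def pathMix (K : ℕ) (γ ϑ : Fin K → ℝ) (n s : ℕ) : ℝ :=
  ∑ i, γ i * pathProb (ϑ i) n s

noncomputable def pathLoss (k : ℕ) (θs : Fin k → ℝ) (lam : Fin k → Fin k → ℝ)
    (n s : ℕ) (j : Fin k) : ℝ :=
  ∑ i ∈ univ.filter (· ≠ j), lam i j * pathProb (θs i) n s

noncomputable def pathStopLoss (k : ℕ) (θs : Fin k → ℝ) (lam : Fin k → Fin k → ℝ)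
    (n s : ℕ) : ℝ :=
  ⨅ j, pathLoss k θs lam n s j

/-- `U_n^N(s) = C(n,s) · pathValue n s` (`U_eq`): the value per sample path with `s` successes. -/
noncomputable def pathValue (k : ℕ) (θs : Fin k → ℝ) (lam : Fin k → Fin k → ℝ)
    (K : ℕ) (γ ϑ : Fin K → ℝ) (N : ℕ) : ℕ → ℕ → ℝ :=
  fun n s =>
    if _h : n < N then
      min (pathStopLoss k θs lam n s)
        (pathMix K γ ϑ n s +
          (pathValue k θs lam K γ ϑ N (n + 1) s + pathValue k θs lam K γ ϑ N (n + 1) (s + 1)))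
    else pathStopLoss k θs lam n s
  termination_by n _s => N - n

noncomputable def pathContinue (k : ℕ) (θs : Fin k → ℝ) (lam : Fin k → Fin k → ℝ)
    (K : ℕ) (γ ϑ : Fin K → ℝ) (N n s : ℕ) : ℝ :=
  pathMix K γ ϑ n s +
    (pathValue k θs lam K γ ϑ N (n + 1) s + pathValue k θs lam K γ ϑ N (n + 1) (s + 1))

/-- `g_{γϑ}^n(s) + (𝒥_{n+1}U_{n+1}^N)(s)`, the loss of taking one more observation. -/
noncomputable def continueValue (k : ℕ) (θs : Fin k → ℝ) (lam : Fin k → Fin k → ℝ)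
    (K : ℕ) (γ ϑ : Fin K → ℝ) (N n s : ℕ) : ℝ :=
  gmix K γ ϑ n s +
    (U k θs lam K γ ϑ N (n + 1) s * ((n + 1 - s : ℕ) : ℝ) / (n + 1) +
      U k θs lam K γ ϑ N (n + 1) (s + 1) * ((s + 1 : ℕ) : ℝ) / (n + 1))

lemma fmix_eq_pathMix (n : ℕ) (x : Fin n → Bool) :
    fmix K γ ϑ n x = pathMix K γ ϑ n (count x) := rfl

lemma binom_eq (θ : ℝ) (n s : ℕ) : binom θ n s = n.choose s * pathProb θ n s :=
  mul_assoc _ _ _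

lemma gmix_eq (n s : ℕ) : gmix K γ ϑ n s = n.choose s * pathMix K γ ϑ n s := by
  simp only [gmix, pathMix, binom_eq, mul_sum]
  exact sum_congr rfl fun _ _ => by ring

lemma sum_mul_binom_eq (n s : ℕ) (j : Fin k) :
    ∑ i ∈ univ.filter (· ≠ j), lam i j * binom (θs i) n s =
      n.choose s * pathLoss k θs lam n s j := by
  simp only [pathLoss, binom_eq, mul_sum]
  exact sum_congr rfl fun _ _ => by ring

lemma ufun_eq (n s : ℕ) : ufun k θs lam n s = n.choose s * pathStopLoss k θs lam n s := by
  simp only [ufun, pathStopLoss, Real.mul_iInf_of_nonneg (Nat.cast_nonneg _), sum_mul_binom_eq]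

lemma pathStopLoss_le (n s : ℕ) (j : Fin k) :
    pathStopLoss k θs lam n s ≤ pathLoss k θs lam n s j :=
  ciInf_le (Set.finite_range _).bddBelow j

lemma pathValue_of_lt {n s : ℕ} (h : n < N) :
    pathValue k θs lam K γ ϑ N n s =
      min (pathStopLoss k θs lam n s) (pathContinue k θs lam K γ ϑ N n s) := by
  rw [pathValue, dif_pos h, pathContinue]

lemma pathValue_of_not_lt {n s : ℕ} (h : ¬ n < N) :
    pathValue k θs lam K γ ϑ N n s = pathStopLoss k θs lam n s := by
  rw [pathValue, dif_neg h]

lemma U_of_lt {n s : ℕ} (h : n < N) :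
    U k θs lam K γ ϑ N n s = min (ufun k θs lam n s) (continueValue k θs lam K γ ϑ N n s) := by
  rw [U, dif_pos h, continueValue]

lemma U_of_not_lt {n s : ℕ} (h : ¬ n < N) : U k θs lam K γ ϑ N n s = ufun k θs lam n s := by
  rw [U, dif_neg h]

lemma continueValue_eq_of_U_eq {n : ℕ}
    (hU : ∀ t, U k θs lam K γ ϑ N (n + 1) t =
      (n + 1).choose t * pathValue k θs lam K γ ϑ N (n + 1) t) (s : ℕ) :
    continueValue k θs lam K γ ϑ N n s = n.choose s * pathContinue k θs lam K γ ϑ N n s := by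
  have h₁ : ((n + 1).choose s : ℝ) * ((n + 1 - s : ℕ) : ℝ) = n.choose s * (n + 1) := by
    exact_mod_cast (Nat.choose_mul_succ_eq n s).symm
  have h₂ : ((n + 1).choose (s + 1) : ℝ) * ((s + 1 : ℕ) : ℝ) = n.choose s * (n + 1) := by
    rw [mul_comm (n.choose s : ℝ)]
    exact_mod_cast (Nat.add_one_mul_choose_eq n s).symm
  rw [continueValue, pathContinue, hU, hU, gmix_eq]
  field_simp
  linear_combination pathValue k θs lam K γ ϑ N (n + 1) s * h₁ +
    pathValue k θs lam K γ ϑ N (n + 1) (s + 1) * h₂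

lemma U_eq (n s : ℕ) :
    U k θs lam K γ ϑ N n s = n.choose s * pathValue k θs lam K γ ϑ N n s := by
  by_cases h : n < N
  · rw [U_of_lt h, pathValue_of_lt h, continueValue_eq_of_U_eq (fun t => U_eq (n + 1) t),
      ufun_eq, mul_min_of_nonneg _ _ (Nat.cast_nonneg _)]
  · rw [U_of_not_lt h, pathValue_of_not_lt h, ufun_eq]
  termination_by N - n

lemma continueValue_eq (n s : ℕ) :
    continueValue k θs lam K γ ϑ N n s = n.choose s * pathContinue k θs lam K γ ϑ N n s :=
  continueValue_eq_of_U_eq (fun t => U_eq (n + 1) t) s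

lemma psiStar_of_not_lt {n s : ℕ} (h : ¬ n < N) : psiStar k θs lam K γ ϑ N n s = 1 := by
  simp only [psiStar, if_neg h]

lemma truncatedAt_psiStar (hN : 1 ≤ N) : TruncatedAt (psiStar k θs lam K γ ϑ N) N := fun _ =>
  prod_eq_zero (mem_range.2 (Nat.sub_lt hN one_pos))
    (by rw [Nat.sub_add_cancel hN, psiStar_of_not_lt (lt_irrefl N), sub_self])

end PathValue

section Densities

variable {K : ℕ} {γ ϑ : Fin K → ℝ} {n : ℕ}

lemma fpow_snoc (θ : ℝ) (x : Fin n → Bool) :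
    fpow θ (n + 1) (Fin.snoc x true) + fpow θ (n + 1) (Fin.snoc x false) = fpow θ n x := by
  have hc := count_le x
  simp only [fpow, count_snoc, Bool.toNat_true, Bool.toNat_false, add_zero,
    Nat.add_sub_add_right, Nat.sub_add_comm hc, pow_succ]
  ring

lemma fmix_snoc (x : Fin n → Bool) :
    fmix K γ ϑ (n + 1) (Fin.snoc x true) + fmix K γ ϑ (n + 1) (Fin.snoc x false) =
      fmix K γ ϑ n x := by
  simp only [fmix, ← sum_add_distrib, ← mul_add, fpow_snoc]

end Densities

section NodeValue

variable {k : ℕ} {θs : Fin k → ℝ} {lam : Fin k → Fin k → ℝ} {K : ℕ} {γ ϑ : Fin K → ℝ} {N : ℕ}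
  {n : ℕ}

/-- The sampling cost spent to reach `x` plus the optimal loss from `x` on. -/
noncomputable def nodeValue (k : ℕ) (θs : Fin k → ℝ) (lam : Fin k → Fin k → ℝ)
    (K : ℕ) (γ ϑ : Fin K → ℝ) (N n : ℕ) (x : Fin n → Bool) : ℝ :=
  n * fmix K γ ϑ n x + pathValue k θs lam K γ ϑ N n (count x)

lemma add_pathContinue_eq (x : Fin n → Bool) :
    n * fmix K γ ϑ n x + pathContinue k θs lam K γ ϑ N n (count x) =
      nodeValue k θs lam K γ ϑ N (n + 1) (Fin.snoc x true) +
        nodeValue k θs lam K γ ϑ N (n + 1) (Fin.snoc x false) := by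
  rw [nodeValue, nodeValue, pathContinue, count_snoc, count_snoc, Bool.toNat_true,
    Bool.toNat_false, add_zero, ← fmix_eq_pathMix, ← fmix_snoc x]
  push_cast
  ring

lemma nodeValue_of_lt (h : n < N) (x : Fin n → Bool) :
    nodeValue k θs lam K γ ϑ N n x =
      min (n * fmix K γ ϑ n x + pathStopLoss k θs lam n (count x))
        (nodeValue k θs lam K γ ϑ N (n + 1) (Fin.snoc x true) +
          nodeValue k θs lam K γ ϑ N (n + 1) (Fin.snoc x false)) := by
  rw [nodeValue, pathValue_of_lt h, ← min_add_add_left, add_pathContinue_eq]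

lemma nodeValue_of_not_lt (h : ¬ n < N) (x : Fin n → Bool) :
    nodeValue k θs lam K γ ϑ N n x = n * fmix K γ ϑ n x + pathStopLoss k θs lam n (count x) := by
  rw [nodeValue, pathValue_of_not_lt h]

lemma psiStar_count_of_lt (h : n < N) (x : Fin n → Bool) :
    psiStar k θs lam K γ ϑ N n (count x) =
      if n * fmix K γ ϑ n x + pathStopLoss k θs lam n (count x) ≤
          nodeValue k θs lam K γ ϑ N (n + 1) (Fin.snoc x true) +
            nodeValue k θs lam K γ ϑ N (n + 1) (Fin.snoc x false)
      then 1 else 0 := by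
  have hpos : (0 : ℝ) < n.choose (count x) := by exact_mod_cast Nat.choose_pos (count_le x)
  have hstop : ufun k θs lam n (count x) ≤ continueValue k θs lam K γ ϑ N n (count x) ↔
      n * fmix K γ ϑ n x + pathStopLoss k θs lam n (count x) ≤
        nodeValue k θs lam K γ ϑ N (n + 1) (Fin.snoc x true) +
          nodeValue k θs lam K γ ϑ N (n + 1) (Fin.snoc x false) := by
    rw [ufun_eq, continueValue_eq, mul_le_mul_iff_right₀ hpos, ← add_pathContinue_eq,
      add_le_add_iff_left]
  simp only [psiStar, if_pos h]
  exact if_congr hstop rfl rfl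

lemma sum_nodeValue_one (hγ1 : ∑ i, γ i = 1) :
    ∑ x : Fin 1 → Bool, nodeValue k θs lam K γ ϑ N 1 x =
      1 + U k θs lam K γ ϑ N 1 0 + U k θs lam K γ ϑ N 1 1 := by
  have hroot : count (Fin.elim0 : Fin 0 → Bool) = 0 := by simp [count]
  have hmass : fmix K γ ϑ 1 (Fin.snoc Fin.elim0 true) + fmix K γ ϑ 1 (Fin.snoc Fin.elim0 false)
      = 1 := by
    rw [fmix_snoc]
    simp [fmix, fpow, hroot, hγ1]
  rw [sum_eq_sum_snoc, Fintype.sum_subsingleton _ Fin.elim0]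
  simp only [nodeValue, Fintype.sum_bool, count_snoc, hroot, U_eq, Bool.toNat_true,
    Bool.toNat_false]
  norm_num
  linear_combination hmass

end NodeValue

section Tests

variable {k : ℕ} {θs : Fin k → ℝ} {lam : Fin k → Fin k → ℝ} {K : ℕ} {γ ϑ : Fin K → ℝ} {N : ℕ}
  {ψ : ℕ → ℕ → ℝ} {φ : ℕ → ℕ → Fin k → ℝ}

noncomputable def stageCost (k : ℕ) (θs : Fin k → ℝ) (lam : Fin k → Fin k → ℝ)
    (K : ℕ) (γ ϑ : Fin K → ℝ) (φ : ℕ → ℕ → Fin k → ℝ) (n : ℕ) (x : Fin n → Bool) : ℝ :=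
  (n : ℝ) * fmix K γ ϑ n x +
    ∑ j, φ n (count x) j * ∑ i ∈ univ.filter (· ≠ j), lam i j * fpow (θs i) n x

/-- `sstop ψ n x = survival ψ n x * ψ n (s_n(x))`. -/
noncomputable def survival (ψ : ℕ → ℕ → ℝ) (n : ℕ) (x : Fin n → Bool) : ℝ :=
  ∏ m ∈ range (n - 1), (1 - ψ (m + 1) (prefixCount x (m + 1)))

/-- The Lagrangian of `⟨ψ,φ⟩` restricted to the paths through `x`, divided by the probability
`survival ψ n x` of reaching `x`. -/
noncomputable def tailLagr (k : ℕ) (θs : Fin k → ℝ) (lam : Fin k → Fin k → ℝ)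
    (K : ℕ) (γ ϑ : Fin K → ℝ) (N : ℕ) (ψ : ℕ → ℕ → ℝ) (φ : ℕ → ℕ → Fin k → ℝ) :
    (n : ℕ) → (Fin n → Bool) → ℝ :=
  fun n x =>
    ψ n (count x) * stageCost k θs lam K γ ϑ φ n x +
      if _h : n < N then
        (1 - ψ n (count x)) *
          (tailLagr k θs lam K γ ϑ N ψ φ (n + 1) (Fin.snoc x true) +
            tailLagr k θs lam K γ ϑ N ψ φ (n + 1) (Fin.snoc x false))
      else 0
  termination_by n _x => N - n

lemma tailLagr_of_lt {n : ℕ} (h : n < N) (x : Fin n → Bool) :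
    tailLagr k θs lam K γ ϑ N ψ φ n x =
      ψ n (count x) * stageCost k θs lam K γ ϑ φ n x +
        (1 - ψ n (count x)) *
          (tailLagr k θs lam K γ ϑ N ψ φ (n + 1) (Fin.snoc x true) +
            tailLagr k θs lam K γ ϑ N ψ φ (n + 1) (Fin.snoc x false)) := by
  rw [tailLagr, dif_pos h]

lemma tailLagr_of_not_lt {n : ℕ} (h : ¬ n < N) (x : Fin n → Bool) :
    tailLagr k θs lam K γ ϑ N ψ φ n x = ψ n (count x) * stageCost k θs lam K γ ϑ φ n x := by
  rw [tailLagr, dif_neg h, add_zero]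

lemma survival_nonneg (hψ : ∀ n s, ψ n s ∈ Set.Icc (0 : ℝ) 1) (n : ℕ) (x : Fin n → Bool) :
    0 ≤ survival ψ n x :=
  prod_nonneg fun _ _ => sub_nonneg.2 (hψ _ _).2

lemma survival_one (x : Fin 1 → Bool) : survival ψ 1 x = 1 := by
  simp [survival]

lemma survival_mul_one_sub {n : ℕ} (hn : 1 ≤ n) (x : Fin n → Bool) :
    survival ψ n x * (1 - ψ n (count x)) =
      ∏ m ∈ range n, (1 - ψ (m + 1) (prefixCount x (m + 1))) := by
  obtain ⟨n, rfl⟩ := Nat.exists_eq_add_of_le' hn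
  rw [survival, prod_range_succ, Nat.add_sub_cancel, prefixCount_self]

lemma survival_snoc {n : ℕ} (hn : 1 ≤ n) (x : Fin n → Bool) (b : Bool) :
    survival ψ (n + 1) (Fin.snoc x b) = survival ψ n x * (1 - ψ n (count x)) := by
  rw [survival_mul_one_sub hn, survival, Nat.add_sub_cancel]
  exact prod_congr rfl fun m hm => by rw [prefixCount_snoc x b (mem_range.1 hm)]

lemma sum_Icc_survival_mul_stageCost {n : ℕ} (hn : 1 ≤ n) (hnN : n ≤ N) :
    ∑ l ∈ Icc n N, ∑ y : Fin l → Bool,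
        survival ψ l y * ψ l (count y) * stageCost k θs lam K γ ϑ φ l y =
      ∑ x : Fin n → Bool, survival ψ n x * tailLagr k θs lam K γ ϑ N ψ φ n x := by
  rcases hnN.lt_or_eq with h | rfl
  · rw [← insert_Icc_add_one_left_eq_Icc hnN, sum_insert (by simp),
      sum_Icc_survival_mul_stageCost (n := n + 1) (by omega) h, sum_eq_sum_snoc,
      ← sum_add_distrib]
    refine sum_congr rfl fun x _ => ?_
    simp only [Fintype.sum_bool, survival_snoc hn, tailLagr_of_lt h]
    ring
  · simp only [Icc_self, sum_singleton, tailLagr_of_not_lt (lt_irrefl n), mul_assoc]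
  termination_by N - n

lemma lagr_eq_sum_tailLagr (hN : 1 ≤ N) :
    Lagr k θs lam K γ ϑ N ψ φ = ∑ x : Fin 1 → Bool, tailLagr k θs lam K γ ϑ N ψ φ 1 x := by
  have h := sum_Icc_survival_mul_stageCost (k := k) (θs := θs) (lam := lam) (γ := γ) (ϑ := ϑ)
    (ψ := ψ) (φ := φ) le_rfl hN
  simp only [survival_one, one_mul] at h
  rw [← h]
  simp only [Lagr, sstop, prefixCount_self]
  rfl

lemma le_stageCost {n : ℕ} {x : Fin n → Bool} (hφ : ∀ j, 0 ≤ φ n (count x) j)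
    (hφ1 : ∑ j, φ n (count x) j = 1) :
    n * fmix K γ ϑ n x + pathStopLoss k θs lam n (count x) ≤ stageCost k θs lam K γ ϑ φ n x := by
  refine add_le_add_right ?_ _
  calc pathStopLoss k θs lam n (count x)
      = ∑ j, φ n (count x) j * pathStopLoss k θs lam n (count x) := by
        rw [← sum_mul, hφ1, one_mul]
    _ ≤ ∑ j, φ n (count x) j * pathLoss k θs lam n (count x) j :=
        sum_le_sum fun j _ => mul_le_mul_of_nonneg_left (pathStopLoss_le _ _ j) (hφ j)

lemma stageCost_of_attains
    (hφs : ∀ n s : ℕ, ∃ j : Fin k,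
      (∑ i ∈ univ.filter (· ≠ j), lam i j * binom (θs i) n s = ufun k θs lam n s) ∧
        ∀ j' : Fin k, φ n s j' = if j' = j then 1 else 0)
    (n : ℕ) (x : Fin n → Bool) :
    stageCost k θs lam K γ ϑ φ n x = n * fmix K γ ϑ n x + pathStopLoss k θs lam n (count x) := by
  obtain ⟨j, hj, hφj⟩ := hφs n (count x)
  have hpos : (0 : ℝ) < n.choose (count x) := by exact_mod_cast Nat.choose_pos (count_le x)
  rw [sum_mul_binom_eq, ufun_eq] at hj
  rw [stageCost]
  congr 1
  calc ∑ j', φ n (count x) j' * pathLoss k θs lam n (count x) j'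
      = pathLoss k θs lam n (count x) j := by simp [hφj]
    _ = pathStopLoss k θs lam n (count x) := mul_left_cancel₀ hpos.ne' hj

end Tests

section Optimality

variable {k : ℕ} {θs : Fin k → ℝ} {lam : Fin k → Fin k → ℝ} {K : ℕ} {γ ϑ : Fin K → ℝ} {N : ℕ}
  {ψ : ℕ → ℕ → ℝ} {φ : ℕ → ℕ → Fin k → ℝ}

lemma tailLagr_psiStar
    (hφs : ∀ n s : ℕ, ∃ j : Fin k,
      (∑ i ∈ univ.filter (· ≠ j), lam i j * binom (θs i) n s = ufun k θs lam n s) ∧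
        ∀ j' : Fin k, φ n s j' = if j' = j then 1 else 0)
    (n : ℕ) (x : Fin n → Bool) :
    tailLagr k θs lam K γ ϑ N (psiStar k θs lam K γ ϑ N) φ n x =
      nodeValue k θs lam K γ ϑ N n x := by
  by_cases h : n < N
  · rw [tailLagr_of_lt h, nodeValue_of_lt h, psiStar_count_of_lt h, stageCost_of_attains hφs,
      tailLagr_psiStar hφs (n + 1), tailLagr_psiStar hφs (n + 1)]
    split_ifs with hstop
    · rw [min_eq_left hstop]
      ring
    · rw [min_eq_right (le_of_not_ge hstop)]
      ring
  · rw [tailLagr_of_not_lt h, psiStar_of_not_lt h, nodeValue_of_not_lt h,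
      stageCost_of_attains hφs, one_mul]
  termination_by N - n

lemma survival_mul_nodeValue_le (hψ : ∀ n s, ψ n s ∈ Set.Icc (0 : ℝ) 1)
    (hφ : ∀ n s j, 0 ≤ φ n s j) (hφ1 : ∀ n s, ∑ j, φ n s j = 1) (hT : TruncatedAt ψ N)
    {n : ℕ} (hn : 1 ≤ n) (hnN : n ≤ N) (x : Fin n → Bool) :
    survival ψ n x * nodeValue k θs lam K γ ϑ N n x ≤
      survival ψ n x * tailLagr k θs lam K γ ϑ N ψ φ n x := by
  set p := survival ψ n x
  set q := ψ n (count x)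
  have hp : 0 ≤ p := survival_nonneg hψ n x
  have hq : q ∈ Set.Icc (0 : ℝ) 1 := hψ n (count x)
  have hstop : p * q * (n * fmix K γ ϑ n x + pathStopLoss k θs lam n (count x)) ≤
      p * q * stageCost k θs lam K γ ϑ φ n x :=
    mul_le_mul_of_nonneg_left (le_stageCost (hφ n (count x)) (hφ1 n (count x)))
      (mul_nonneg hp hq.1)
  rcases hnN.lt_or_eq with h | rfl
  · have hchild (b : Bool) :=
      survival_mul_nodeValue_le hψ hφ hφ1 hT (n := n + 1) (by omega) h (Fin.snoc x b)
    simp only [survival_snoc hn] at hchild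
    calc p * nodeValue k θs lam K γ ϑ N n x
        ≤ p * (q * (n * fmix K γ ϑ n x + pathStopLoss k θs lam n (count x)) +
            (1 - q) * (nodeValue k θs lam K γ ϑ N (n + 1) (Fin.snoc x true) +
              nodeValue k θs lam K γ ϑ N (n + 1) (Fin.snoc x false))) := by
          rw [nodeValue_of_lt h]
          exact mul_le_mul_of_nonneg_left (min_le_mul_add_one_sub_mul hq) hp
      _ = p * q * (n * fmix K γ ϑ n x + pathStopLoss k θs lam n (count x)) +
            p * (1 - q) * nodeValue k θs lam K γ ϑ N (n + 1) (Fin.snoc x true) +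
            p * (1 - q) * nodeValue k θs lam K γ ϑ N (n + 1) (Fin.snoc x false) := by
          ring
      _ ≤ p * q * stageCost k θs lam K γ ϑ φ n x +
            p * (1 - q) * tailLagr k θs lam K γ ϑ N ψ φ (n + 1) (Fin.snoc x true) +
            p * (1 - q) * tailLagr k θs lam K γ ϑ N ψ φ (n + 1) (Fin.snoc x false) :=
          add_le_add (add_le_add hstop (hchild true)) (hchild false)
      _ = p * tailLagr k θs lam K γ ϑ N ψ φ n x := by
          rw [tailLagr_of_lt h]
          ring
  · have htrunc : p * (1 - q) = 0 := by rw [survival_mul_one_sub hn]; exact hT x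
    calc p * nodeValue k θs lam K γ ϑ n n x
        = p * q * (n * fmix K γ ϑ n x + pathStopLoss k θs lam n (count x)) := by
          rw [nodeValue_of_not_lt (lt_irrefl n)]
          linear_combination (n * fmix K γ ϑ n x + pathStopLoss k θs lam n (count x)) * htrunc
      _ ≤ p * q * stageCost k θs lam K γ ϑ φ n x := hstop
      _ = p * tailLagr k θs lam K γ ϑ n ψ φ n x := by
          rw [tailLagr_of_not_lt (lt_irrefl n)]
          ring
  termination_by N - n

end Optimality

theorem stmt15_general (k : ℕ) (θs : Fin k → ℝ)
    (lam : Fin k → Fin k → ℝ)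
    (K : ℕ) (γ ϑ : Fin K → ℝ)
    (hγ1 : ∑ i, γ i = 1)
    (N : ℕ) (hN : 2 ≤ N)
    (φs : ℕ → ℕ → Fin k → ℝ)
    (hφs : ∀ n s : ℕ, ∃ j : Fin k,
      (∑ i ∈ Finset.univ.filter (· ≠ j), lam i j * binom (θs i) n s =
          ufun k θs lam n s) ∧
        ∀ j' : Fin k, φs n s j' = if j' = j then 1 else 0) :
    TruncatedAt (psiStar k θs lam K γ ϑ N) N ∧
      Lagr k θs lam K γ ϑ N (psiStar k θs lam K γ ϑ N) φs =
        1 + U k θs lam K γ ϑ N 1 0 + U k θs lam K γ ϑ N 1 1 ∧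
      ∀ (ψ : ℕ → ℕ → ℝ) (φ : ℕ → ℕ → Fin k → ℝ),
        (∀ n s, ψ n s ∈ Set.Icc (0 : ℝ) 1) →
        (∀ n s j, φ n s j ∈ Set.Icc (0 : ℝ) 1) →
        (∀ n s, ∑ j, φ n s j = 1) →
        TruncatedAt ψ N →
        Lagr k θs lam K γ ϑ N (psiStar k θs lam K γ ϑ N) φs ≤
          Lagr k θs lam K γ ϑ N ψ φ := by
  have hN1 : 1 ≤ N := by omega
  have hvalue : Lagr k θs lam K γ ϑ N (psiStar k θs lam K γ ϑ N) φs =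
      1 + U k θs lam K γ ϑ N 1 0 + U k θs lam K γ ϑ N 1 1 := by
    rw [lagr_eq_sum_tailLagr hN1, ← sum_nodeValue_one hγ1]
    exact sum_congr rfl fun x _ => tailLagr_psiStar hφs 1 x
  refine ⟨truncatedAt_psiStar hN1, hvalue, fun ψ φ hψ hφ hφ1 hT => ?_⟩
  rw [hvalue, lagr_eq_sum_tailLagr hN1, ← sum_nodeValue_one hγ1]
  refine sum_le_sum fun x _ => ?_
  simpa only [survival_one, one_mul] using
    survival_mul_nodeValue_le hψ (fun n s j => (hφ n s j).1) hφ1 hT le_rfl hN1 x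

/-- **Attainment of the truncated lower bound by the optimal test (3-4)–(3-5)**: if
`φ*` deterministically picks, for each `n` and `s`, an index `j` attaining
`min_{1≤j≤k} Σ_{i≠j} λ_{ij} g_{θ_i}^n(s) = u_n(s)`, and `ψ*` is the stopping rule
`psiStar` above, then `ψ* ∈ 𝒮^N`, the Lagrangian `L(ψ*,φ*)` equals
`1 + U_1^N(0) + U_1^N(1)`, and hence `⟨ψ*,φ*⟩` minimizes the Lagrangian among all
tests based on the sufficient statistic truncated at `N`. -/
theorem stmt15 (k : ℕ) (hk : 2 ≤ k) (θs : Fin k → ℝ)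
    (hθ : ∀ i, θs i ∈ Set.Icc (0 : ℝ) 1)
    (lam : Fin k → Fin k → ℝ) (hlam : ∀ i j, 0 ≤ lam i j)
    (K : ℕ) (hK : 1 ≤ K) (γ ϑ : Fin K → ℝ)
    (hγ : ∀ i, 0 ≤ γ i) (hγ1 : ∑ i, γ i = 1)
    (hϑ : ∀ i, ϑ i ∈ Set.Icc (0 : ℝ) 1)
    (N : ℕ) (hN : 2 ≤ N)
    (φs : ℕ → ℕ → Fin k → ℝ)
    (hφs : ∀ n s : ℕ, ∃ j : Fin k,
      (∑ i ∈ Finset.univ.filter (· ≠ j), lam i j * binom (θs i) n s =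
          ufun k θs lam n s) ∧
        ∀ j' : Fin k, φs n s j' = if j' = j then 1 else 0) :
    TruncatedAt (psiStar k θs lam K γ ϑ N) N ∧
      Lagr k θs lam K γ ϑ N (psiStar k θs lam K γ ϑ N) φs =
        1 + U k θs lam K γ ϑ N 1 0 + U k θs lam K γ ϑ N 1 1 ∧
      ∀ (ψ : ℕ → ℕ → ℝ) (φ : ℕ → ℕ → Fin k → ℝ),
        (∀ n s, ψ n s ∈ Set.Icc (0 : ℝ) 1) →
        (∀ n s j, φ n s j ∈ Set.Icc (0 : ℝ) 1) →
        (∀ n s, ∑ j, φ n s j = 1) →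
        TruncatedAt ψ N →
        Lagr k θs lam K γ ϑ N (psiStar k θs lam K γ ϑ N) φs ≤
          Lagr k θs lam K γ ϑ N ψ φ :=
  stmt15_general k θs lam K γ ϑ hγ1 N hN φs hφs
end
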